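/- L^p perturbation bound for posterior densities under perturbation of the observable (Lemma 4.5): Assume ρ satisfies (N.1)–(N.3), and let L, L' : X → ℝ^d be Borel measurable with ‖L‖_{L²(μ_prior)} < ∞ and ‖L'‖_{L²(μ_prior)} < ∞; let Z(y) := ∫_X ρ(y − L(ū)) dμ_prior(ū) and Z'(y) := ∫_X ρ(y − L'(ū)) dμ_prior(ū). There exists a constant C > 0, depending only on ρ, such that for every p ∈ [1,∞] and every y ∈ ℝ^d: ‖ ρ(y − L'(·))/Z'(y) − ρ(y − L(·))/Z(y) ‖_{L^p(μ_prior)} ≤ C ‖ |L'(·) − L(·)|_Γ ‖_{L^p(μ_prior)} · exp( 2|y|_Γ² + ‖L'‖²_{L²(μ_prior)} + ‖L‖²_{L²(μ_prior)} ). -/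

import Mathlib

/-!
Write `Z, Z'` for the two normalisers and `δ = |L' - L|_Γ`. By (N.1), `|Z' - Z| ≤ Lρ ∫ δ`, and
`ρ(y - L')/Z' - ρ(y - L)/Z = (ρ(y - L') - ρ(y - L))/Z' + ρ(y - L) (Z - Z')/(Z Z')`,
so by (N.1) and (N.2) the difference is pointwise at most `Lρ δ / Z' + Cb Lρ (∫ δ) / (Z Z')`.
Jensen's inequality for `exp` against the Gaussian tail (N.3) gives
`Z⁻¹ ≤ Ct exp (|y|_Γ² + ‖L‖²_{L²})`, and `∫ δ ≤ ‖δ‖_{L^p}` on a probability space.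
-/

open MeasureTheory
open scoped BigOperators ENNReal Matrix

noncomputable section

/-- The Γ-weighted norm `|y|_Γ = sqrt ⟨y, Γ⁻¹ y⟩` on `ℝ^d`. -/
def gammaNorm {d : ℕ} (Γ : Matrix (Fin d) (Fin d) ℝ) (y : Fin d → ℝ) : ℝ :=
  Real.sqrt (y ⬝ᵥ (Γ⁻¹).mulVec y)

/-- A noise density satisfying (N.1)–(N.3). -/
structure IsNoiseDensity {d : ℕ} (Γ : Matrix (Fin d) (Fin d) ℝ) (ρ : (Fin d → ℝ) → ℝ)
    (Lρ Cb Ct : ℝ) : Prop where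
  Lρ_pos : 0 < Lρ
  Cb_pos : 0 < Cb
  Ct_pos : 0 < Ct
  pos : ∀ y, 0 < ρ y
  lip : ∀ y y', |ρ y - ρ y'| ≤ Lρ * gammaNorm Γ (y - y')
  bdd : ∀ y, ρ y ≤ Cb
  tail : ∀ y, Ct⁻¹ * Real.exp (-(1 / 2) * (gammaNorm Γ y) ^ 2) ≤ ρ y

/-- Wasserstein-1 distance in Kantorovich–Rubinstein dual form. -/
def W1 {X : Type*} [NormedAddCommGroup X] [MeasurableSpace X] (μ ν : Measure X) : ℝ :=
  sSup {r : ℝ | ∃ Φ : X → ℝ, LipschitzWith 1 Φ ∧ Φ 0 = 0 ∧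
    r = (∫ u, Φ u ∂μ) - ∫ u, Φ u ∂ν}

/-- Normalization constant `Z(y) = ∫ ρ(y − L(ū)) dμ_prior(ū)`. -/
def bayesZ {X : Type*} [MeasurableSpace X] {d : ℕ} (μp : Measure X)
    (ρ : (Fin d → ℝ) → ℝ) (L : X → Fin d → ℝ) (y : Fin d → ℝ) : ℝ :=
  ∫ u, ρ (y - L u) ∂μp

/-- The Bayesian posterior `μ^y = Z(y)⁻¹ ρ(y − L(·)) · μ_prior`. -/
def bayesPosterior {X : Type*} [MeasurableSpace X] {d : ℕ} (μp : Measure X)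
    (ρ : (Fin d → ℝ) → ℝ) (L : X → Fin d → ℝ) (y : Fin d → ℝ) : Measure X :=
  μp.withDensity fun u => ENNReal.ofReal (ρ (y - L u) / bayesZ μp ρ L y)

section gammaNorm

variable {d : ℕ}

lemma gammaNorm_nonneg (Γ : Matrix (Fin d) (Fin d) ℝ) (y : Fin d → ℝ) : 0 ≤ gammaNorm Γ y :=
  Real.sqrt_nonneg _

lemma gammaNorm_neg (Γ : Matrix (Fin d) (Fin d) ℝ) (y : Fin d → ℝ) :
    gammaNorm Γ (-y) = gammaNorm Γ y := by
  simp only [gammaNorm, Matrix.mulVec_neg, neg_dotProduct, dotProduct_neg, neg_neg]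

lemma gammaNorm_sub_comm (Γ : Matrix (Fin d) (Fin d) ℝ) (x y : Fin d → ℝ) :
    gammaNorm Γ (x - y) = gammaNorm Γ (y - x) := by
  rw [← gammaNorm_neg, neg_sub]

lemma continuous_gammaNorm (Γ : Matrix (Fin d) (Fin d) ℝ) : Continuous (gammaNorm Γ) := by
  unfold gammaNorm
  simp only [dotProduct, Matrix.mulVec]
  fun_prop

lemma gammaNorm_add_le {Γ : Matrix (Fin d) (Fin d) ℝ} (hΓ : (Γ⁻¹).PosSemidef)
    (x y : Fin d → ℝ) :
    gammaNorm Γ (x + y) ≤ gammaNorm Γ x + gammaNorm Γ y := by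
  let S := Matrix.toSeminormedAddCommGroup _ hΓ
  have h_eq_norm : ∀ z, gammaNorm Γ z = @norm _ S.toNorm z := fun z => by
    rw [@norm_eq_sqrt_real_inner _ S (Matrix.toInnerProductSpace _ hΓ) z]
    simp [gammaNorm, inner, dotProduct_comm]
  simpa only [h_eq_norm] using @norm_add_le _ S.toSeminormedAddGroup x y

lemma gammaNorm_sub_sq_le {Γ : Matrix (Fin d) (Fin d) ℝ} (hΓ : (Γ⁻¹).PosSemidef)
    (x y : Fin d → ℝ) :
    gammaNorm Γ (x - y) ^ 2 ≤ 2 * gammaNorm Γ x ^ 2 + 2 * gammaNorm Γ y ^ 2 := by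
  have h_tri : gammaNorm Γ (x - y) ≤ gammaNorm Γ x + gammaNorm Γ y := by
    simpa only [sub_eq_add_neg, gammaNorm_neg] using gammaNorm_add_le hΓ x (-y)
  nlinarith [gammaNorm_nonneg Γ (x - y), sq_nonneg (gammaNorm Γ x - gammaNorm Γ y)]

end gammaNorm

lemma exp_integral_le_integral_exp {α : Type*} [MeasurableSpace α] {μ : Measure α}
    [IsProbabilityMeasure μ] {f : α → ℝ} (hf : Integrable f μ)
    (hexp : Integrable (fun x => Real.exp (f x)) μ) :
    Real.exp (∫ x, f x ∂μ) ≤ ∫ x, Real.exp (f x) ∂μ :=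
  convexOn_exp.map_integral_le Real.continuous_exp.continuousOn isClosed_univ
    (Filter.Eventually.of_forall fun _ => Set.mem_univ _) hf hexp

lemma abs_div_sub_div_le {a a' Z Z' c c' B δ ε : ℝ} (hZ : 0 < Z) (hZ' : 0 < Z')
    (hc : Z⁻¹ ≤ c) (hc' : Z'⁻¹ ≤ c') (ha : 0 ≤ a) (haB : a ≤ B) (hδ : |a' - a| ≤ δ)
    (hε : |Z' - Z| ≤ ε) :
    |a' / Z' - a / Z| ≤ δ * c' + B * ε * (c * c') := by
  have h_split : a' / Z' - a / Z = (a' - a) * Z'⁻¹ + a * (Z - Z') * (Z⁻¹ * Z'⁻¹) := by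
    field_simp
    ring
  have hZ'_inv := inv_nonneg.2 hZ'.le
  have hε' : |Z - Z'| ≤ ε := abs_sub_comm Z Z' ▸ hε
  calc |a' / Z' - a / Z|
      ≤ |a' - a| * Z'⁻¹ + a * |Z - Z'| * (Z⁻¹ * Z'⁻¹) := by
        rw [h_split]
        refine (abs_add_le _ _).trans_eq ?_
        rw [abs_mul, abs_mul, abs_mul, abs_of_nonneg ha, abs_of_nonneg hZ'_inv,
          abs_of_nonneg (by positivity : 0 ≤ Z⁻¹ * Z'⁻¹)]
    _ ≤ δ * c' + B * ε * (c * c') := by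
        have hc_nonneg : 0 ≤ c := (inv_nonneg.2 hZ.le).trans hc
        have hδ_nonneg : 0 ≤ δ := (abs_nonneg _).trans hδ
        have hε_nonneg : 0 ≤ ε := (abs_nonneg _).trans hε
        have hB_nonneg : 0 ≤ B := ha.trans haB
        gcongr

lemma eLpNorm_le_of_abs_le_mul_add_integral {α : Type*} [MeasurableSpace α] {μ : Measure α}
    [IsProbabilityMeasure μ] {F g : α → ℝ} {a b : ℝ} {p : ℝ≥0∞} (hp : 1 ≤ p) (ha : 0 ≤ a)
    (hb : 0 ≤ b) (hg : AEStronglyMeasurable g μ) (hF : ∀ x, |F x| ≤ a * g x + b * ∫ y, g y ∂μ) :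
    eLpNorm F p μ ≤ ENNReal.ofReal (a + b) * eLpNorm g p μ := by
  have h_const : eLpNorm (fun _ => b * ∫ y, g y ∂μ) p μ ≤ ENNReal.ofReal b * eLpNorm g p μ :=
    calc eLpNorm (fun _ => b * ∫ y, g y ∂μ) p μ
        = ‖b‖ₑ * ‖∫ y, g y ∂μ‖ₑ := by
          rw [eLpNorm_const _ (by positivity) (IsProbabilityMeasure.ne_zero μ)]
          simp [enorm_mul]
      _ ≤ ENNReal.ofReal b * eLpNorm g 1 μ := by
          rw [Real.enorm_eq_ofReal hb, eLpNorm_one_eq_lintegral_enorm]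
          gcongr
          exact enorm_integral_le_lintegral_enorm g
      _ ≤ ENNReal.ofReal b * eLpNorm g p μ := by
          gcongr
          exact eLpNorm_le_eLpNorm_of_exponent_le hp hg
  calc eLpNorm F p μ
      ≤ eLpNorm ((a • g) + fun _ => b * ∫ y, g y ∂μ) p μ := eLpNorm_mono_real hF
    _ ≤ eLpNorm (a • g) p μ + eLpNorm (fun _ => b * ∫ y, g y ∂μ) p μ :=
        eLpNorm_add_le (hg.const_smul a) aestronglyMeasurable_const hp
    _ ≤ ENNReal.ofReal a * eLpNorm g p μ + ENNReal.ofReal b * eLpNorm g p μ := by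
        rw [eLpNorm_const_smul, Real.enorm_eq_ofReal ha]
        gcongr
    _ = ENNReal.ofReal (a + b) * eLpNorm g p μ := by
        rw [ENNReal.ofReal_add ha hb, add_mul]

namespace IsNoiseDensity

variable {d : ℕ} {Γ : Matrix (Fin d) (Fin d) ℝ} {ρ : (Fin d → ℝ) → ℝ} {Lρ Cb Ct : ℝ}

lemma continuous (hρ : IsNoiseDensity Γ ρ Lρ Cb Ct) : Continuous ρ := by
  refine continuous_iff_continuousAt.2 fun x => tendsto_iff_norm_sub_tendsto_zero.2 ?_
  have h_lim : Filter.Tendsto (fun y => Lρ * gammaNorm Γ (y - x)) (nhds x) (nhds 0) := by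
    simpa [gammaNorm] using
      ((continuous_gammaNorm Γ).comp (continuous_sub_right x)).tendsto x |>.const_mul Lρ
  exact squeeze_zero (fun _ => norm_nonneg _) (fun y => hρ.lip y x) h_lim

lemma abs_comp_sub_le (hρ : IsNoiseDensity Γ ρ Lρ Cb Ct) (y x x' : Fin d → ℝ) :
    |ρ (y - x') - ρ (y - x)| ≤ Lρ * gammaNorm Γ (x' - x) := by
  simpa only [sub_sub_sub_cancel_left, gammaNorm_sub_comm Γ x] using hρ.lip (y - x') (y - x)

variable {X : Type*} [MeasurableSpace X] {μ : Measure X}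

lemma integrable_comp_sub [IsFiniteMeasure μ] (hρ : IsNoiseDensity Γ ρ Lρ Cb Ct)
    {M : X → Fin d → ℝ} (hM : Measurable M) (y : Fin d → ℝ) :
    Integrable (fun u => ρ (y - M u)) μ :=
  Integrable.of_bound (hρ.continuous.measurable.comp (measurable_const.sub hM)).aestronglyMeasurable
    Cb (Filter.Eventually.of_forall fun u => by
      rw [Real.norm_eq_abs, abs_of_pos (hρ.pos _)]
      exact hρ.bdd _)

lemma exp_le_comp_sub (hρ : IsNoiseDensity Γ ρ Lρ Cb Ct) (hΓ : (Γ⁻¹).PosSemidef)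
    (y x : Fin d → ℝ) :
    Ct⁻¹ * Real.exp (-(gammaNorm Γ y ^ 2 + gammaNorm Γ x ^ 2)) ≤ ρ (y - x) := by
  refine le_trans ?_ (hρ.tail (y - x))
  gcongr
  · exact inv_nonneg.2 hρ.Ct_pos.le
  · linarith [gammaNorm_sub_sq_le hΓ y x]

end IsNoiseDensity

section bayesZ

variable {X : Type*} [MeasurableSpace X] {μ : Measure X} {d : ℕ} {Γ : Matrix (Fin d) (Fin d) ℝ}
  {ρ : (Fin d → ℝ) → ℝ} {Lρ Cb Ct : ℝ}

lemma bayesZ_ge [IsProbabilityMeasure μ] (hρ : IsNoiseDensity Γ ρ Lρ Cb Ct)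
    (hΓ : (Γ⁻¹).PosSemidef) {M : X → Fin d → ℝ} (hM : Measurable M)
    (hM2 : Integrable (fun u => gammaNorm Γ (M u) ^ 2) μ) (y : Fin d → ℝ) :
    Ct⁻¹ * Real.exp (-(gammaNorm Γ y ^ 2 + ∫ u, gammaNorm Γ (M u) ^ 2 ∂μ))
      ≤ bayesZ μ ρ M y := by
  set h : X → ℝ := fun u => -(gammaNorm Γ y ^ 2 + gammaNorm Γ (M u) ^ 2)
  have h_int : Integrable h μ := ((integrable_const _).add hM2).neg
  have h_exp_int : Integrable (fun u => Real.exp (h u)) μ := by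
    refine Integrable.of_bound (h_int.aestronglyMeasurable.aemeasurable.exp.aestronglyMeasurable)
      1 (Filter.Eventually.of_forall fun u => ?_)
    rw [Real.norm_eq_abs, abs_of_pos (Real.exp_pos _), Real.exp_le_one_iff]
    simp only [h]
    nlinarith
  have h_integral : ∫ u, h u ∂μ = -(gammaNorm Γ y ^ 2 + ∫ u, gammaNorm Γ (M u) ^ 2 ∂μ) := by
    simp only [h, integral_neg, integral_add (integrable_const _) hM2, integral_const,
      probReal_univ, one_smul]
  calc Ct⁻¹ * Real.exp (-(gammaNorm Γ y ^ 2 + ∫ u, gammaNorm Γ (M u) ^ 2 ∂μ))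
      ≤ Ct⁻¹ * ∫ u, Real.exp (h u) ∂μ := by
        rw [← h_integral]
        gcongr
        · exact inv_nonneg.2 hρ.Ct_pos.le
        · exact exp_integral_le_integral_exp h_int h_exp_int
    _ = ∫ u, Ct⁻¹ * Real.exp (h u) ∂μ := (integral_const_mul _ _).symm
    _ ≤ bayesZ μ ρ M y :=
        integral_mono (h_exp_int.const_mul _) (hρ.integrable_comp_sub hM y)
          fun u => hρ.exp_le_comp_sub hΓ y (M u)

lemma inv_bayesZ_le [IsProbabilityMeasure μ] (hρ : IsNoiseDensity Γ ρ Lρ Cb Ct)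
    (hΓ : (Γ⁻¹).PosSemidef) {M : X → Fin d → ℝ} (hM : Measurable M)
    (hM2 : Integrable (fun u => gammaNorm Γ (M u) ^ 2) μ) (y : Fin d → ℝ) :
    0 < bayesZ μ ρ M y ∧
      (bayesZ μ ρ M y)⁻¹ ≤ Ct * Real.exp (gammaNorm Γ y ^ 2 + ∫ u, gammaNorm Γ (M u) ^ 2 ∂μ) := by
  have h_ge := bayesZ_ge hρ hΓ hM hM2 y
  have h_pos : 0 < Ct⁻¹ * Real.exp (-(gammaNorm Γ y ^ 2 + ∫ u, gammaNorm Γ (M u) ^ 2 ∂μ)) :=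
    mul_pos (inv_pos.2 hρ.Ct_pos) (Real.exp_pos _)
  refine ⟨h_pos.trans_le h_ge, ?_⟩
  rw [← inv_inv (Ct * _), mul_inv, ← Real.exp_neg]
  exact inv_anti₀ h_pos h_ge

lemma abs_bayesZ_sub_le [IsFiniteMeasure μ] (hρ : IsNoiseDensity Γ ρ Lρ Cb Ct)
    {L L' : X → Fin d → ℝ} (hL : Measurable L) (hL' : Measurable L')
    (hδ : Integrable (fun u => gammaNorm Γ (L' u - L u)) μ) (y : Fin d → ℝ) :
    |bayesZ μ ρ L' y - bayesZ μ ρ L y| ≤ Lρ * ∫ u, gammaNorm Γ (L' u - L u) ∂μ := by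
  have h_int := hρ.integrable_comp_sub (μ := μ) hL y
  have h_int' := hρ.integrable_comp_sub (μ := μ) hL' y
  calc |bayesZ μ ρ L' y - bayesZ μ ρ L y|
      = |∫ u, (ρ (y - L' u) - ρ (y - L u)) ∂μ| := by rw [bayesZ, bayesZ, integral_sub h_int' h_int]
    _ ≤ ∫ u, |ρ (y - L' u) - ρ (y - L u)| ∂μ := abs_integral_le_integral_abs
    _ ≤ ∫ u, Lρ * gammaNorm Γ (L' u - L u) ∂μ :=
        integral_mono (h_int'.sub h_int).abs (hδ.const_mul Lρ) fun u => hρ.abs_comp_sub_le y _ _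
    _ = Lρ * ∫ u, gammaNorm Γ (L' u - L u) ∂μ := integral_const_mul _ _

lemma integrable_gammaNorm_sub [IsFiniteMeasure μ] (hΓ : (Γ⁻¹).PosSemidef)
    {L L' : X → Fin d → ℝ} (hL : Measurable L) (hL' : Measurable L')
    (hL2 : Integrable (fun u => gammaNorm Γ (L u) ^ 2) μ)
    (hL'2 : Integrable (fun u => gammaNorm Γ (L' u) ^ 2) μ) :
    Integrable (fun u => gammaNorm Γ (L' u - L u)) μ := by
  have h_meas : AEStronglyMeasurable (fun u => gammaNorm Γ (L' u - L u)) μ :=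
    ((continuous_gammaNorm Γ).measurable.comp (hL'.sub hL)).aestronglyMeasurable
  refine ((memLp_two_iff_integrable_sq h_meas).2 ?_).integrable one_le_two
  refine ((hL'2.const_mul 2).add (hL2.const_mul 2)).mono' (h_meas.pow 2)
    (Filter.Eventually.of_forall fun u => ?_)
  rw [Real.norm_of_nonneg (sq_nonneg _)]
  exact gammaNorm_sub_sq_le hΓ _ _

end bayesZ

lemma mul_exp_add_mul_exp_mul_exp_le {a b c t s s' : ℝ} (ha : 0 ≤ a) (hc : 0 ≤ c)
    (hts : 0 ≤ t + s) :
    a * (c * Real.exp (t + s')) + b * (c * Real.exp (t + s) * (c * Real.exp (t + s')))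
      ≤ (a * c + b * c ^ 2) * Real.exp (2 * t + s' + s) := by
  have h_exp_le : Real.exp (t + s') ≤ Real.exp (2 * t + s' + s) :=
    Real.exp_le_exp.2 (by linarith)
  have h_exp_mul : Real.exp (t + s) * Real.exp (t + s') = Real.exp (2 * t + s' + s) := by
    rw [← Real.exp_add]; ring_nf
  calc a * (c * Real.exp (t + s')) + b * (c * Real.exp (t + s) * (c * Real.exp (t + s')))
      ≤ a * (c * Real.exp (2 * t + s' + s)) + b * (c ^ 2 * Real.exp (2 * t + s' + s)) := by
        rw [mul_mul_mul_comm c, ← sq, h_exp_mul]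
        gcongr
    _ = (a * c + b * c ^ 2) * Real.exp (2 * t + s' + s) := by ring

theorem posterior_density_perturbation_Lp_general
    {X : Type*} [MeasurableSpace X]
    {d : ℕ}
    (Γ : Matrix (Fin d) (Fin d) ℝ) (hΓ : Γ.PosDef)
    (ρ : (Fin d → ℝ) → ℝ) (Lρ Cb Ct : ℝ) (hρ : IsNoiseDensity Γ ρ Lρ Cb Ct) :
    ∃ C > 0, ∀ μp : Measure X, IsProbabilityMeasure μp →
      ∀ L L' : X → Fin d → ℝ, Measurable L → Measurable L' →
        Integrable (fun u => (gammaNorm Γ (L u)) ^ 2) μp →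
        Integrable (fun u => (gammaNorm Γ (L' u)) ^ 2) μp →
      ∀ p : ℝ≥0∞, 1 ≤ p → ∀ y : Fin d → ℝ,
        eLpNorm
            (fun u => ρ (y - L' u) / bayesZ μp ρ L' y - ρ (y - L u) / bayesZ μp ρ L y)
            p μp
          ≤ ENNReal.ofReal
              (C * Real.exp (2 * (gammaNorm Γ y) ^ 2
                + (∫ v, (gammaNorm Γ (L' v)) ^ 2 ∂μp)
                + ∫ v, (gammaNorm Γ (L v)) ^ 2 ∂μp)) *
            eLpNorm (fun u => gammaNorm Γ (L' u - L u)) p μp := by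
  have hLρ := hρ.Lρ_pos
  have hCb := hρ.Cb_pos
  have hCt := hρ.Ct_pos
  refine ⟨Lρ * Ct + Cb * Lρ * Ct ^ 2, by positivity, fun μp _ L L' hL hL' hL2 hL'2 p hp y => ?_⟩
  have hΓ' := hΓ.inv.posSemidef
  obtain ⟨hZ, hZ_inv⟩ := inv_bayesZ_le hρ hΓ' hL hL2 y
  obtain ⟨hZ', hZ'_inv⟩ := inv_bayesZ_le hρ hΓ' hL' hL'2 y
  have hδ := integrable_gammaNorm_sub hΓ' hL hL' hL2 hL'2 (μ := μp)
  have h_pointwise := fun u => abs_div_sub_div_le hZ hZ' hZ_inv hZ'_inv (hρ.pos _).le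
    (hρ.bdd _) (hρ.abs_comp_sub_le y (L u) (L' u)) (abs_bayesZ_sub_le hρ hL hL' hδ y)
  set t := gammaNorm Γ y ^ 2
  set s := ∫ v, gammaNorm Γ (L v) ^ 2 ∂μp
  set s' := ∫ v, gammaNorm Γ (L' v) ^ 2 ∂μp
  refine (eLpNorm_le_of_abs_le_mul_add_integral (a := Lρ * (Ct * Real.exp (t + s')))
    (b := Cb * Lρ * (Ct * Real.exp (t + s) * (Ct * Real.exp (t + s')))) hp
    (by positivity) (by positivity) hδ.aestronglyMeasurable
    fun u => (h_pointwise u).trans_eq (by ring)).trans ?_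
  gcongr
  exact mul_exp_add_mul_exp_mul_exp_le hLρ.le hCt.le
    (add_nonneg (sq_nonneg _) (integral_nonneg fun _ => sq_nonneg _))

/-- **Lemma 4.5: `L^p` perturbation bound for the posterior density under a
perturbation of the observable, with a constant depending only on the noise
density `ρ` (valid for every `p ∈ [1,∞]`).** -/
theorem posterior_density_perturbation_Lp
    {X : Type*} [NormedAddCommGroup X] [NormedSpace ℝ X] [CompleteSpace X]
    [TopologicalSpace.SeparableSpace X] [MeasurableSpace X] [BorelSpace X]
    {d : ℕ}
    (Γ : Matrix (Fin d) (Fin d) ℝ) (hΓ : Γ.PosDef)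
    (ρ : (Fin d → ℝ) → ℝ) (Lρ Cb Ct : ℝ) (hρ : IsNoiseDensity Γ ρ Lρ Cb Ct) :
    ∃ C > 0, ∀ μp : Measure X, IsProbabilityMeasure μp →
      ∀ L L' : X → Fin d → ℝ, Measurable L → Measurable L' →
        Integrable (fun u => (gammaNorm Γ (L u)) ^ 2) μp →
        Integrable (fun u => (gammaNorm Γ (L' u)) ^ 2) μp →
      ∀ p : ℝ≥0∞, 1 ≤ p → ∀ y : Fin d → ℝ,
        eLpNorm
            (fun u => ρ (y - L' u) / bayesZ μp ρ L' y - ρ (y - L u) / bayesZ μp ρ L y)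
            p μp
          ≤ ENNReal.ofReal
              (C * Real.exp (2 * (gammaNorm Γ y) ^ 2
                + (∫ v, (gammaNorm Γ (L' v)) ^ 2 ∂μp)
                + ∫ v, (gammaNorm Γ (L v)) ^ 2 ∂μp)) *
            eLpNorm (fun u => gammaNorm Γ (L' u - L u)) p μp :=
  posterior_density_perturbation_Lp_general Γ hΓ ρ Lρ Cb Ct hρ
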